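/- arXiv:1902.08389 — 2 statements merged into one kernel-verified Lean document; each statement's English description precedes it below -/
import Mathlib

section
/- Let S be a finite subset of a (not necessarily associative) unital algebra A. Every fresh word in S of length greater than 1 is a product of two fresh words of strictly positive lengths. -/
/-- Words in a finite subset `S` of a (not necessarily associative) unital algebra:
`IsWord S n a` means `a` is a product (with some bracketing) of `n` elements of `S`,
where `1` is the unique word of length `0`. -/
inductive IsWord {A : Type*} [NonAssocRing A] (S : Set A) : ℕ → A → Prop
  | one : IsWord S 0 1
  | base : ∀ a, a ∈ S → IsWord S 1 a
  | mul : ∀ {m n : ℕ} {a b : A}, 0 < m → 0 < n → IsWord S m a → IsWord S n b →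
      IsWord S (m + n) (a * b)

/-- `Lspan F S k` is the `F`-linear span of all words in `S` of length at most `k`. -/
def Lspan (F : Type*) {A : Type*} [Field F] [NonAssocRing A] [Module F A]
    (S : Set A) (k : ℕ) : Submodule F A :=
  Submodule.span F {a | ∃ m ≤ k, IsWord S m a}

/-- `S` generates the algebra `A` iff the union of all the `Lspan F S k` is all of `A`. -/
def Generates (F : Type*) {A : Type*} [Field F] [NonAssocRing A] [Module F A]
    (S : Set A) : Prop :=
  (⨆ k, Lspan F S k) = ⊤

/-- The length of a generating set: the least `k` with `Lspan F S k = ⊤`. -/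
noncomputable def len (F : Type*) {A : Type*} [Field F] [NonAssocRing A] [Module F A]
    (S : Set A) : ℕ :=
  sInf {k | Lspan F S k = ⊤}

/-- The length of the algebra: the maximum of `len F S` over all finite generating sets. -/
noncomputable def algLen (F : Type*) (A : Type*) [Field F] [NonAssocRing A] [Module F A] : ℕ :=
  sSup {l | ∃ S : Set A, S.Finite ∧ Generates F S ∧ len F S = l}

/-- `w` is a fresh word of length `n` in `S`: a word of length `n` lying in no `Lspan F S m`
for `m < n`. -/
def Fresh (F : Type*) {A : Type*} [Field F] [NonAssocRing A] [Module F A]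
    (S : Set A) (n : ℕ) (w : A) : Prop :=
  IsWord S n w ∧ ∀ m < n, w ∉ Lspan F S m

/-- `(m 0, m 1, …, m N)` is the characteristic sequence of `S`: a non-decreasing sequence
with `m 0 = 0` in which each `k ≥ 1` occurs exactly
`dim Lspan F S k − dim Lspan F S (k-1)` times. -/
def IsCharSeq (F : Type*) {A : Type*} [Field F] [NonAssocRing A] [Module F A]
    (S : Set A) (N : ℕ) (m : ℕ → ℕ) : Prop :=
  m 0 = 0 ∧ (∀ i j, i ≤ j → j ≤ N → m i ≤ m j) ∧
  (∀ t, 1 ≤ t → t ≤ N → 1 ≤ m t) ∧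
  ∀ k, 1 ≤ k →
    ((Finset.range (N + 1)).filter (fun t => m t = k)).card
      = Module.finrank F (Lspan F S k) - Module.finrank F (Lspan F S (k - 1))

lemma isWord_zero {A : Type*} [NonAssocRing A] {S : Set A} {a : A}
    (h : IsWord S 0 a) : a = 1 := by
  generalize hm : (0 : ℕ) = m at h
  cases h with
  | one => rfl
  | base a ha => omega
  | mul hm' hn _ _ => omega

lemma mul_mem_lspan_right {F A : Type*} [Field F] [NonAssocRing A] [Module F A]
    [SMulCommClass F A A] [IsScalarTower F A A] {S : Set A} {k q : ℕ} {u v : A}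
    (hu : u ∈ Lspan F S k) (hv : IsWord S q v) (hq : 0 < q) :
    u * v ∈ Lspan F S (k + q) := by
  have hmap : (LinearMap.mulRight F v) u ∈
      Submodule.map (LinearMap.mulRight F v) (Lspan F S k) := ⟨u, hu, rfl⟩
  rw [Lspan, Submodule.map_span] at hmap
  refine Submodule.span_le.mpr ?_ hmap
  rintro x ⟨a, ⟨m, hm, ha⟩, rfl⟩
  rcases Nat.eq_zero_or_pos m with hm0 | hm0
  · subst hm0
    have : a = 1 := isWord_zero ha
    subst this
    exact Submodule.subset_span ⟨q, by omega, by simpa using hv⟩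
  · exact Submodule.subset_span ⟨m + q, by omega, IsWord.mul hm0 hq ha hv⟩

lemma mul_mem_lspan_left {F A : Type*} [Field F] [NonAssocRing A] [Module F A]
    [SMulCommClass F A A] [IsScalarTower F A A] {S : Set A} {k p : ℕ} {u v : A}
    (hu : IsWord S p u) (hp : 0 < p) (hv : v ∈ Lspan F S k) :
    u * v ∈ Lspan F S (p + k) := by
  have hmap : (LinearMap.mulLeft F u) v ∈
      Submodule.map (LinearMap.mulLeft F u) (Lspan F S k) := ⟨v, hv, rfl⟩
  rw [Lspan, Submodule.map_span] at hmap
  refine Submodule.span_le.mpr ?_ hmap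
  rintro x ⟨a, ⟨m, hm, ha⟩, rfl⟩
  rcases Nat.eq_zero_or_pos m with hm0 | hm0
  · subst hm0
    have : a = 1 := isWord_zero ha
    subst this
    exact Submodule.subset_span ⟨p, by omega, by simpa using hu⟩
  · exact Submodule.subset_span ⟨p + m, by omega, IsWord.mul hp hm0 hu ha⟩

theorem stmt_5 (F : Type*) (A : Type*) [Field F] [NonAssocRing A] [Module F A]
    [SMulCommClass F A A] [IsScalarTower F A A]
    (S : Set A) (hS : S.Finite) (n : ℕ) (hn : 1 < n) (w : A)
    (hw : Fresh F S n w) :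
    ∃ (p q : ℕ) (u v : A), 0 < p ∧ 0 < q ∧ p + q = n ∧
      Fresh F S p u ∧ Fresh F S q v ∧ w = u * v := by
  obtain ⟨hword, hnot⟩ := hw
  cases hword with
  | one => omega
  | base a ha => omega
  | @mul p q u v hp hq hu hv =>
    refine ⟨p, q, u, v, hp, hq, rfl, ⟨hu, ?_⟩, ⟨hv, ?_⟩, rfl⟩
    · intro m hm hmem
      exact hnot (m + q) (by omega) (mul_mem_lspan_right hmem hv hq)
    · intro m hm hmem
      exact hnot (p + m) (by omega) (mul_mem_lspan_left hu hp hmem)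
end

section
/- If A is a locally-complex algebra of dimension n and S is a generating set containing k elements that are linearly independent modulo ℝ, then l(S) ≤ F_{n−k+1}, where F is the Fibonacci sequence with F_1 = F_2 = 1. -/
/-- A locally-complex algebra: a finite-dimensional unital real (not necessarily associative)
algebra that is quadratic (every `a` satisfies `a² = u•1 + v•a`) and has no nontrivial
idempotents and no nonzero square-zero elements. -/
def LocallyComplex (A : Type*) [NonAssocRing A] [Module ℝ A] [SMulCommClass ℝ A A]
    [IsScalarTower ℝ A A] : Prop :=
  FiniteDimensional ℝ A ∧
  (∀ a : A, ∃ u v : ℝ, a * a = u • (1 : A) + v • a) ∧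
  (∀ a : A, a * a = a → a = 0 ∨ a = 1) ∧
  (∀ a : A, a * a = 0 → a = 0)

/-!
Call `j` a jump of `S` if `L_{j-1} < L_j`, and let `d_j = dim L_j`. In a quadratic algebra a word
`u * v` of length `m ≥ 2` outside `L_{m-1}` forces jumps at the lengths `p`, `q` of `u`, `v`.
If `p = q`, then moreover `d_p ≥ d_{p-1} + 2`: otherwise `v ∈ L_{p-1} + ℝ u`, and then
`u * v ∈ L_{m-1}` because `u² ∈ ℝ + ℝ u`. Strong induction over the jumps, starting from
`d_1 ≥ k + 1`, gives `m ≤ fib (d_{m-1} + 2 - k)`; at the last jump `m = l(S)` one has `d_{m-1} < n`.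
-/

open Module Submodule

theorem le_fib_of_forall_split {d : ℕ → ℕ} (hd : Monotone d) {k : ℕ} (hk : k + 1 ≤ d 1)
    (hsplit : ∀ m, 2 ≤ m → d (m - 1) < d m → ∃ p q, p + q = m ∧ 1 ≤ p ∧ 1 ≤ q ∧
      d (p - 1) < d p ∧ d (q - 1) < d q ∧ (p = q → d (p - 1) + 2 ≤ d p)) :
    ∀ m, 2 ≤ m → d (m - 1) < d m → m ≤ Nat.fib (d (m - 1) + 2 - k) := by
  intro m
  induction m using Nat.strong_induction_on with
  | _ m ih =>
  intro hm hjump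
  obtain ⟨p, q, hpq, hp, hq, hjp, hjq, hdiag⟩ := hsplit m hm hjump
  wlog hle : p ≤ q generalizing p q
  · exact this q p (by omega) hq hp hjq hjp (fun h => h ▸ hdiag h.symm) (by omega)
  have hk' : ∀ j, 1 ≤ j → k + 1 ≤ d j := fun j hj => hk.trans (hd hj)
  have hdq : d q ≤ d (m - 1) := hd (by omega)
  rcases hle.lt_or_eq with hlt | rfl
  · have hq2 : 2 ≤ q := by omega
    have hq' := ih q (by omega) hq2 hjq
    have hk1 := hk' (q - 1) (by omega)
    set y := d (q - 1) + 2 - k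
    have hp' : p ≤ Nat.fib (y - 1) := by
      rcases hp.lt_or_eq with hp2 | rfl
      · have hp' := ih p (by omega) hp2 hjp
        have : d p ≤ d (q - 1) := hd (by omega)
        exact hp'.trans (Nat.fib_mono (by omega))
      · exact Nat.fib_pos.mpr (by omega)
    calc m ≤ Nat.fib (y - 1) + Nat.fib y := by omega
      _ = Nat.fib (y + 1) := (Nat.fib_add_one (by omega)).symm
      _ ≤ _ := Nat.fib_mono (by omega)
  · have hgap := hdiag rfl
    rcases hp.lt_or_eq with hp2 | rfl
    · have hp' := ih p (by omega) hp2 hjp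
      have := hk' (p - 1) (by omega)
      set y := d (p - 1) + 2 - k
      calc m = p + p := hpq.symm
        _ ≤ Nat.fib y + Nat.fib (y + 1) := by
          have := Nat.fib_mono (Nat.le_add_right y 1); omega
        _ = Nat.fib (y + 2) := Nat.fib_add_two.symm
        _ ≤ _ := Nat.fib_mono (by omega)
    · calc m = Nat.fib 3 := by rw [← hpq]; rfl
        _ ≤ _ := Nat.fib_mono (by have := hk' (m - 1) (by omega); omega)

section Lspan

variable {F A : Type*} [Field F] [NonAssocRing A] [Module F A] {S : Set A}

theorem IsWord.eq_one_of_length_zero {a : A} (h : IsWord S 0 a) : a = 1 := by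
  generalize hm : 0 = m at h
  cases h with
  | one => rfl
  | base => omega
  | mul hp hq => omega

theorem IsWord.exists_mul {m : ℕ} {w : A} (h : IsWord S m w) (hm : 2 ≤ m) :
    ∃ p q u v, 0 < p ∧ 0 < q ∧ p + q = m ∧ IsWord S p u ∧ IsWord S q v ∧ w = u * v := by
  cases h with
  | one => omega
  | base => omega
  | mul hp hq hu hv => exact ⟨_, _, _, _, hp, hq, rfl, hu, hv, rfl⟩

theorem IsWord.mem_Lspan {m j : ℕ} {a : A} (h : IsWord S m a) (hmj : m ≤ j) :
    a ∈ Lspan F S j :=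
  subset_span ⟨m, hmj, h⟩

theorem Lspan_mono : Monotone (Lspan F S) :=
  fun _ _ h => span_mono fun _ ⟨m, hm, hw⟩ => ⟨m, hm.trans h, hw⟩

theorem one_mem_Lspan (j : ℕ) : (1 : A) ∈ Lspan F S j :=
  IsWord.one.mem_Lspan j.zero_le

theorem exists_Lspan_eq_top [FiniteDimensional F A] (hgen : Generates F S) :
    ∃ N, Lspan F S N = ⊤ := by
  obtain ⟨N, hN⟩ :=
    monotone_stabilizes_iff_noetherian.mpr inferInstance ⟨Lspan F S, Lspan_mono⟩
  refine ⟨N, top_le_iff.mp (hgen ▸ iSup_le fun j => ?_)⟩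
  rcases le_total j N with h | h
  · exact Lspan_mono h
  · exact (hN j h).ge

theorem Lspan_len_eq_top [FiniteDimensional F A] (hgen : Generates F S) :
    Lspan F S (len F S) = ⊤ :=
  Nat.sInf_mem (exists_Lspan_eq_top hgen)

theorem Lspan_ne_top_of_lt_len {j : ℕ} (hj : j < len F S) : Lspan F S j ≠ ⊤ :=
  Nat.notMem_of_lt_sInf hj

theorem exists_isWord_notMem_of_finrank_lt [FiniteDimensional F A] {m : ℕ}
    (h : finrank F (Lspan F S (m - 1)) < finrank F (Lspan F S m)) :
    ∃ w, IsWord S m w ∧ w ∉ Lspan F S (m - 1) := by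
  by_contra! hw
  refine h.not_ge (finrank_mono (span_le.mpr ?_))
  rintro a ⟨j, hj, ha⟩
  rcases hj.lt_or_eq with hj | rfl
  · exact ha.mem_Lspan (by omega)
  · exact hw a ha

theorem finrank_Lspan_lt_of_notMem [FiniteDimensional F A] {m : ℕ} {w : A}
    (hw : IsWord S m w) (hw' : w ∉ Lspan F S (m - 1)) :
    finrank F (Lspan F S (m - 1)) < finrank F (Lspan F S m) :=
  finrank_lt_finrank_of_lt <| (Lspan_mono (Nat.sub_le m 1)).lt_of_ne
    fun h => hw' (h.ge (hw.mem_Lspan le_rfl))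

theorem add_one_le_finrank_Lspan_one [Nontrivial A] [FiniteDimensional F A] {k : ℕ}
    {e : Fin k → A} (he : ∀ i, e i ∈ S)
    (hind : LinearIndependent F fun i => (span F {(1 : A)}).mkQ (e i)) :
    k + 1 ≤ finrank F (Lspan F S 1) := by
  have hli : LinearIndependent F (Sum.elim (fun _ : Unit => (1 : A)) e) :=
    LinearIndependent.sumElim_of_quotient (f := fun _ => ⟨1, mem_span_singleton_self 1⟩)
      (linearIndependent_unique_iff.mpr (by simp)) e hind
  calc k + 1 = finrank F (span F (Set.range (Sum.elim (fun _ : Unit => (1 : A)) e))) := by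
        rw [finrank_span_eq_card hli]; simp [add_comm]
    _ ≤ finrank F (Lspan F S 1) := by
        refine finrank_mono (span_le.mpr (Set.range_subset_iff.mpr ?_))
        rintro (_ | i)
        · exact one_mem_Lspan 1
        · exact (IsWord.base _ (he i)).mem_Lspan le_rfl

theorem IsWord.mul_mem_Lspan {p q : ℕ} {u v : A} (hu : IsWord S p u) (hv : IsWord S q v) :
    u * v ∈ Lspan F S (p + q) := by
  rcases Nat.eq_zero_or_pos p with rfl | hp
  · rw [hu.eq_one_of_length_zero, one_mul]
    exact hv.mem_Lspan (by omega)
  rcases Nat.eq_zero_or_pos q with rfl | hq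
  · rw [hv.eq_one_of_length_zero, mul_one]
    exact hu.mem_Lspan le_rfl
  exact (IsWord.mul hp hq hu hv).mem_Lspan le_rfl

variable [SMulCommClass F A A] [IsScalarTower F A A]

theorem mul_mem_Lspan {a b : ℕ} {x y : A} (hx : x ∈ Lspan F S a) (hy : y ∈ Lspan F S b) :
    x * y ∈ Lspan F S (a + b) := by
  have hle : map₂ (LinearMap.mul F A) (Lspan F S a) (Lspan F S b) ≤ Lspan F S (a + b) := by
    rw [Lspan, Lspan, map₂_span_span, span_le]
    rintro _ ⟨u, ⟨p, hp, hu⟩, v, ⟨q, hq, hv⟩, rfl⟩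
    exact Lspan_mono (add_le_add hp hq) (hu.mul_mem_Lspan hv)
  exact hle (apply_mem_map₂ _ hx hy)

theorem mul_mem_Lspan_of_mem_sup_span (hquad : ∀ a : A, ∃ s t : F, a * a = s • 1 + t • a)
    {p : ℕ} {u v : A} (hu : u ∈ Lspan F S p) (hv : v ∈ Lspan F S (p - 1) ⊔ span F {u}) :
    u * v ∈ Lspan F S (p + p - 1) := by
  obtain ⟨x, hx, z, hz, rfl⟩ := mem_sup.mp hv
  obtain ⟨c, rfl⟩ := mem_span_singleton.mp hz
  rw [mul_add, mul_smul_comm]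
  refine add_mem (Lspan_mono (by omega) (mul_mem_Lspan hu hx)) (smul_mem _ _ ?_)
  obtain ⟨s, t, hst⟩ := hquad u
  rw [hst]
  exact add_mem (smul_mem _ _ (one_mem_Lspan _)) (smul_mem _ _ (Lspan_mono (by omega) hu))

theorem exists_split_of_finrank_lt [FiniteDimensional F A]
    (hquad : ∀ a : A, ∃ s t : F, a * a = s • 1 + t • a) {m : ℕ} (hm : 2 ≤ m)
    (hjump : finrank F (Lspan F S (m - 1)) < finrank F (Lspan F S m)) :
    ∃ p q, p + q = m ∧ 1 ≤ p ∧ 1 ≤ q ∧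
      finrank F (Lspan F S (p - 1)) < finrank F (Lspan F S p) ∧
      finrank F (Lspan F S (q - 1)) < finrank F (Lspan F S q) ∧
      (p = q → finrank F (Lspan F S (p - 1)) + 2 ≤ finrank F (Lspan F S p)) := by
  obtain ⟨w, hw, hwm⟩ := exists_isWord_notMem_of_finrank_lt hjump
  obtain ⟨p, q, u, v, hp, hq, rfl, hu, hv, rfl⟩ := hw.exists_mul hm
  have hu' : u ∉ Lspan F S (p - 1) := fun h =>
    hwm (Lspan_mono (by omega) (mul_mem_Lspan h (hv.mem_Lspan le_rfl)))
  have hv' : v ∉ Lspan F S (q - 1) := fun h =>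
    hwm (Lspan_mono (by omega) (mul_mem_Lspan (hu.mem_Lspan le_rfl) h))
  refine ⟨p, q, rfl, hp, hq, finrank_Lspan_lt_of_notMem hu hu',
    finrank_Lspan_lt_of_notMem hv hv', fun hpq => ?_⟩
  subst hpq
  by_contra! hsmall
  have hsup : Lspan F S (p - 1) ⊔ span F {u} = Lspan F S p := by
    refine eq_of_le_of_finrank_le (sup_le (Lspan_mono (by omega))
      ((span_singleton_le_iff_mem _ _).mpr (hu.mem_Lspan le_rfl))) ?_
    have := finrank_lt_finrank_of_lt (lt_of_le_of_ne (le_sup_left (b := span F {u}))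
      fun h => hu' (h.ge (mem_sup_right (mem_span_singleton_self u))))
    omega
  exact hwm (mul_mem_Lspan_of_mem_sup_span hquad (hu.mem_Lspan le_rfl)
    (hsup ▸ hv.mem_Lspan le_rfl))

end Lspan

theorem stmt_18_general (A : Type*) [NonAssocRing A] [Module ℝ A]
    [SMulCommClass ℝ A A] [IsScalarTower ℝ A A] (hA : LocallyComplex A)
    (n k : ℕ) (hdim : Module.finrank ℝ A = n)
    (S : Set A) (hgen : Generates ℝ S)
    (e : Fin k → A) (he : ∀ i, e i ∈ S)
    (hind : LinearIndependent ℝ (fun i : Fin k => (Submodule.span ℝ {(1 : A)}).mkQ (e i))) :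
    len ℝ S ≤ Nat.fib (n - k + 1) := by
  obtain ⟨hfin, hquad, -, -⟩ := hA
  rcases lt_or_ge (len ℝ S) 2 with hl | hl
  · exact (by omega : len ℝ S ≤ 1).trans (Nat.fib_pos.mpr (by omega))
  have hprev : Lspan ℝ S (len ℝ S - 1) ≠ ⊤ := Lspan_ne_top_of_lt_len (by omega)
  have : Nontrivial A :=
    not_subsingleton_iff_nontrivial.mp fun _ => hprev (Subsingleton.elim _ _)
  have hn : finrank ℝ (Lspan ℝ S (len ℝ S - 1)) < n := hdim ▸ finrank_lt hprev
  have hjump :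
      finrank ℝ (Lspan ℝ S (len ℝ S - 1)) < finrank ℝ (Lspan ℝ S (len ℝ S)) := by
    rwa [Lspan_len_eq_top hgen, finrank_top, hdim]
  have hd1 := add_one_le_finrank_Lspan_one he hind
  have hd1' : finrank ℝ (Lspan ℝ S 1) ≤ finrank ℝ (Lspan ℝ S (len ℝ S - 1)) :=
    finrank_mono (Lspan_mono (by omega))
  calc len ℝ S ≤ Nat.fib (finrank ℝ (Lspan ℝ S (len ℝ S - 1)) + 2 - k) :=
        le_fib_of_forall_split (d := fun j => finrank ℝ (Lspan ℝ S j))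
          (fun _ _ h => finrank_mono (Lspan_mono h)) hd1
          (fun _ hm => exists_split_of_finrank_lt hquad hm) _ hl hjump
    _ ≤ Nat.fib (n - k + 1) := Nat.fib_mono (by omega)

theorem stmt_18 (A : Type*) [NonAssocRing A] [Module ℝ A]
    [SMulCommClass ℝ A A] [IsScalarTower ℝ A A] (hA : LocallyComplex A)
    (n k : ℕ) (hdim : Module.finrank ℝ A = n)
    (S : Set A) (hS : S.Finite) (hgen : Generates ℝ S)
    (e : Fin k → A) (he : ∀ i, e i ∈ S)
    (hind : LinearIndependent ℝ (fun i : Fin k => (Submodule.span ℝ {(1 : A)}).mkQ (e i))) :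
    len ℝ S ≤ Nat.fib (n - k + 1) :=
  stmt_18_general A hA n k hdim S hgen e he hind
end
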